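/- arXiv:1601.07415 — 3 statements merged into one kernel-verified Lean document; each statement's English description precedes it below -/
import Mathlib

section
/- Let Ω be the (κ+1)×(κ+1) real matrix with entries Ω_{l,k} = τ l (d_{k+1} + δ_{l,k+1}) − (γ + τ l) δ_{l,k} for l,k ∈ {0,1,…,κ}, where τ, γ > 0 and d_1,…,d_κ are nonnegative reals with d_{κ+1} = 0 (indices of d beyond κ interpreted as 0). Then the eigenvalues of Ω are λ_i = −γ − i τ for i ∈ {0,2,3,…,κ} and λ_1 = τ((∑_{l=0}^{κ} l d_{l+1}) − 1) − γ. -/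
open Polynomial Finset

private lemma sum_delta {n : ℕ} (c : ℕ) (hc : c < n) (f : Fin n → ℝ) :
    (∑ b : Fin n, if (b : ℕ) = c then f b else 0) = f ⟨c, hc⟩ := by
  rw [Finset.sum_eq_single (⟨c, hc⟩ : Fin n)]
  · simp
  · intro b _ hb
    exact if_neg (fun h => hb (Fin.ext h))
  · intro h; exact absurd (Finset.mem_univ _) h

private lemma charpoly_eq_of_conj {n : Type*} [DecidableEq n] [Fintype n]
    (A P Q B : Matrix n n ℝ) (hQP : Q * P = 1) (h : A * P = P * B) :
    A.charpoly = B.charpoly := by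
  have hdet : Q.det * P.det = 1 := by rw [← Matrix.det_mul, hQP, Matrix.det_one]
  have hP : P.det ≠ 0 := right_ne_zero_of_mul_eq_one hdet
  have key : A.charmatrix * P.map C = P.map C * B.charmatrix := by
    unfold Matrix.charmatrix
    rw [Matrix.sub_mul, Matrix.mul_sub]
    congr 1
    · exact Matrix.scalar_commute X (fun r => Commute.all X r) (P.map C)
    · simp only [RingHom.mapMatrix_apply]
      rw [← Matrix.map_mul, h, Matrix.map_mul]
  have hdet2 : A.charpoly * C P.det = C P.det * B.charpoly := by
    have := congrArg Matrix.det key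
    rw [Matrix.det_mul, Matrix.det_mul] at this
    rw [show A.charpoly = A.charmatrix.det from rfl, show B.charpoly = B.charmatrix.det from rfl]
    rwa [← RingHom.mapMatrix_apply, ← RingHom.map_det] at this
  have hC : (C P.det : ℝ[X]) ≠ 0 := by
    simpa using hP
  rw [mul_comm] at hdet2
  exact mul_left_cancel₀ hC hdet2

noncomputable def Pmm (κ : ℕ) : Matrix (Fin (κ+1)) (Fin (κ+1)) ℝ := fun i p =>
  if (p : ℕ) = κ then ((i : ℕ) : ℝ)
  else if (p : ℕ) = 0 then (if (i : ℕ) = 0 then 1 else 0)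
  else (if (i : ℕ) = (p : ℕ) + 1 then 1 else 0)

noncomputable def Qmm (κ : ℕ) : Matrix (Fin (κ+1)) (Fin (κ+1)) ℝ := fun q i =>
  if (q : ℕ) = κ then (if (i : ℕ) = 1 then 1 else 0)
  else if (q : ℕ) = 0 then (if (i : ℕ) = 0 then 1 else 0)
  else (if (i : ℕ) = (q : ℕ) + 1 then 1 else if (i : ℕ) = 1 then -((q : ℕ) : ℝ) - 1 else 0)

noncomputable def Mmm (κ : ℕ) (τ γ : ℝ) (d : ℕ → ℝ) :
    Matrix (Fin (κ+1)) (Fin (κ+1)) ℝ := fun q p =>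
  if (p : ℕ) = κ then
    (if (q : ℕ) = κ then τ * ((∑ l ∈ range (κ+1), (l : ℝ) * d (l + 1)) - 1) - γ else 0)
  else if (p : ℕ) = 0 then
    (if (q : ℕ) = 0 then -γ
     else if (q : ℕ) = κ then τ * (1 + d 1)
     else -τ * (((q : ℕ) : ℝ) + 1))
  else
    (if (q : ℕ) = (p : ℕ) then -(γ + τ * (((p : ℕ) : ℝ) + 1))
     else if (q : ℕ) = κ then τ * d ((p : ℕ) + 2)
     else if (q : ℕ) = (p : ℕ) + 1 then τ * (((p : ℕ) : ℝ) + 2)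
     else 0)

def eFun (κ : ℕ) : Fin (κ+1) → Fin (κ+1) := fun p =>
  ⟨if (p : ℕ) = 0 then 0 else if (p : ℕ) = κ then 1 else (p : ℕ) + 1,
   by have := p.isLt; split_ifs <;> omega⟩

def gFun (κ : ℕ) : Fin (κ+1) → Fin (κ+1) := fun q =>
  ⟨if (q : ℕ) = 0 then 0 else if (q : ℕ) = 1 then κ else (q : ℕ) - 1,
   by have := q.isLt; split_ifs <;> omega⟩

def ePerm (κ : ℕ) : Fin (κ+1) ≃ Fin (κ+1) where
  toFun := eFun κ
  invFun := gFun κ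
  left_inv := by
    intro p
    have hlt := p.isLt
    apply Fin.ext
    by_cases hp0 : (p : ℕ) = 0
    · simp only [eFun, gFun, hp0, if_pos rfl]
      simp
    · by_cases hpκ : (p : ℕ) = κ
      · simp only [eFun, gFun, if_neg hp0, if_pos hpκ]
        split_ifs <;> first | contradiction | omega
      · simp only [eFun, gFun, if_neg hp0, if_neg hpκ]
        split_ifs <;> first | contradiction | omega
  right_inv := by
    intro q
    have hlt := q.isLt
    apply Fin.ext
    by_cases hq0 : (q : ℕ) = 0
    · simp only [eFun, gFun, hq0, if_pos rfl]
      simp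
    · by_cases hq1 : (q : ℕ) = 1
      · simp only [eFun, gFun, if_neg hq0, if_pos hq1]
        split_ifs <;> first | contradiction | omega
      · simp only [eFun, gFun, if_neg hq0, if_neg hq1]
        split_ifs <;> first | contradiction | omega

theorem stmt_3 (κ : ℕ) (τ γ : ℝ) (hτ : 0 < τ) (hγ : 0 < γ)
    (d : ℕ → ℝ) (hd : ∀ k, 0 ≤ d k) (hd' : ∀ k, κ < k → d k = 0)
    (Ω : Matrix (Fin (κ+1)) (Fin (κ+1)) ℝ)
    (hΩ : ∀ l k : Fin (κ+1),
      Ω l k = τ * (l : ℝ) * (d (k + 1) + (if (l : ℕ) = (k : ℕ) + 1 then 1 else 0))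
              - (γ + τ * (l : ℝ)) * (if l = k then 1 else 0))
    (lam : Fin (κ+1) → ℝ)
    (hlam : ∀ i : Fin (κ+1),
      lam i = if (i : ℕ) = 1
        then τ * ((∑ l ∈ range (κ+1), (l : ℝ) * d (l + 1)) - 1) - γ
        else -γ - (i : ℝ) * τ) :
    Ω.charpoly = ∏ i : Fin (κ+1), (X - C (lam i)) := by
  by_cases hκ : κ = 0
  · subst hκ
    have h00 : Ω 0 0 = -γ := by
      rw [hΩ]
      norm_num
    rw [show Ω.charpoly = Ω.charmatrix.det from rfl, Matrix.det_fin_one,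
      Matrix.charmatrix_apply_eq, h00, Fin.prod_univ_succ, Fin.prod_univ_zero, mul_one, hlam 0]
    norm_num
  have hκ1 : 1 ≤ κ := Nat.pos_of_ne_zero hκ
  -- Q * P = 1
  have hQP : Qmm κ * Pmm κ = 1 := by
    ext q p
    rw [Matrix.mul_apply, Matrix.one_apply]
    have hq := q.isLt
    have hp := p.isLt
    by_cases hqκ : (q : ℕ) = κ
    · have h1 : ∀ i : Fin (κ+1), Qmm κ q i * Pmm κ i p
          = if (i : ℕ) = 1 then Pmm κ i p else 0 := by
        intro i
        simp only [Qmm, if_pos hqκ]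
        split_ifs <;> ring
      rw [Finset.sum_congr rfl (fun i _ => h1 i), sum_delta 1 (by omega)]
      simp only [Pmm, Fin.ext_iff]
      split_ifs <;> push_cast <;> first | contradiction | (exfalso; omega) | norm_num | ring1
    · by_cases hq0 : (q : ℕ) = 0
      · have h1 : ∀ i : Fin (κ+1), Qmm κ q i * Pmm κ i p
            = if (i : ℕ) = 0 then Pmm κ i p else 0 := by
          intro i
          simp only [Qmm, if_neg hqκ, if_pos hq0]
          split_ifs <;> ring
        rw [Finset.sum_congr rfl (fun i _ => h1 i), sum_delta 0 (by omega)]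
        simp only [Pmm, Fin.ext_iff]
        split_ifs <;> push_cast <;> first | contradiction | (exfalso; omega) | norm_num | ring1
      · have h1 : ∀ i : Fin (κ+1), Qmm κ q i * Pmm κ i p
            = (if (i : ℕ) = (q : ℕ) + 1 then Pmm κ i p else 0)
              + (if (i : ℕ) = 1 then (-((q : ℕ) : ℝ) - 1) * Pmm κ i p else 0) := by
          intro i
          simp only [Qmm, if_neg hqκ, if_neg hq0]
          split_ifs <;> first | ring1 | (exfalso; omega)
        rw [Finset.sum_congr rfl (fun i _ => h1 i), Finset.sum_add_distrib,
          sum_delta ((q:ℕ)+1) (by omega), sum_delta 1 (by omega)]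
        simp only [Pmm, Fin.ext_iff]
        split_ifs <;> push_cast <;> first | contradiction | (exfalso; omega) | norm_num | ring1
  -- Ω * P = P * M
  have hΩP : Ω * Pmm κ = Pmm κ * Mmm κ τ γ d := by
    ext l p
    rw [Matrix.mul_apply, Matrix.mul_apply]
    have hl := l.isLt
    have hp := p.isLt
    have hadd : ∀ x : ℕ, x + 1 + 1 = x + 2 := fun x => by omega
    by_cases hpκ : (p : ℕ) = κ
    · -- column κ : eigenvector column
      have hRHS : ∀ b : Fin (κ+1), Pmm κ l b * Mmm κ τ γ d b p
          = if (b : ℕ) = κ then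
              Pmm κ l b * (τ * ((∑ j ∈ range (κ+1), (j : ℝ) * d (j + 1)) - 1) - γ) else 0 := by
        intro b
        simp only [Mmm, if_pos hpκ]
        split_ifs <;> ring1
      rw [Finset.sum_congr rfl (fun b _ => hRHS b), sum_delta κ (by omega)]
      have hPlκ : Pmm κ l ⟨κ, by omega⟩ = ((l : ℕ) : ℝ) := by simp [Pmm]
      rw [hPlκ]
      have hL : ∀ b : Fin (κ+1), Ω l b * Pmm κ b p
          = (τ * ((l : ℕ) : ℝ) * (d ((b : ℕ) + 1) * ((b : ℕ) : ℝ)))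
            + (if (l : ℕ) = (b : ℕ) + 1 then τ * ((l : ℕ) : ℝ) * ((b : ℕ) : ℝ) else 0)
            - (if (b : ℕ) = (l : ℕ) then (γ + τ * ((l : ℕ) : ℝ)) * ((b : ℕ) : ℝ) else 0) := by
        intro b
        rw [hΩ]
        simp only [Pmm, if_pos hpκ, Fin.ext_iff]
        split_ifs <;> first | ring1 | (exfalso; omega)
      rw [Finset.sum_congr rfl (fun b _ => hL b), Finset.sum_sub_distrib,
        Finset.sum_add_distrib, sum_delta (l : ℕ) l.isLt,
        Fin.sum_univ_eq_sum_range (fun j => τ * ((l : ℕ) : ℝ) * (d (j + 1) * (j : ℝ)))]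
      have hsum : (∑ j ∈ range (κ+1), τ * ((l : ℕ) : ℝ) * (d (j + 1) * (j : ℝ)))
          = τ * ((l : ℕ) : ℝ) * (∑ j ∈ range (κ+1), (j : ℝ) * d (j + 1)) := by
        rw [Finset.mul_sum]
        exact Finset.sum_congr rfl (fun j _ => by ring)
      rw [hsum]
      simp only [Fin.val_mk]
      by_cases hl0 : (l : ℕ) = 0
      · rw [Finset.sum_eq_zero (fun b _ => if_neg (by omega))]
        simp only [hl0]
        push_cast
        ring
      · obtain ⟨m, hm⟩ : ∃ m, (l : ℕ) = m + 1 := ⟨(l : ℕ) - 1, by omega⟩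
        have h2 : (∑ b : Fin (κ+1), if (l : ℕ) = (b : ℕ) + 1 then τ * ((l : ℕ) : ℝ) * ((b : ℕ) : ℝ) else 0)
            = ∑ b : Fin (κ+1), if (b : ℕ) = m then τ * ((l : ℕ) : ℝ) * ((b : ℕ) : ℝ) else 0 :=
          Finset.sum_congr rfl (fun b _ => by split_ifs <;> first | rfl | (exfalso; omega))
        rw [h2, sum_delta m (by omega)]
        simp only [Fin.val_mk, hm]
        push_cast
        ring
    · by_cases hp0 : (p : ℕ) = 0
      · -- column 0
        have hL : ∀ b : Fin (κ+1), Ω l b * Pmm κ b p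
            = if (b : ℕ) = 0 then Ω l b else 0 := by
          intro b
          simp only [Pmm, if_neg hpκ, if_pos hp0]
          split_ifs <;> ring1
        rw [Finset.sum_congr rfl (fun b _ => hL b), sum_delta 0 (by omega), hΩ]
        by_cases hl0 : (l : ℕ) = 0
        · have hRHS : ∀ b : Fin (κ+1), Pmm κ l b * Mmm κ τ γ d b p
              = if (b : ℕ) = 0 then -γ else 0 := by
            intro b
            simp only [Pmm, Mmm, if_neg hpκ, if_pos hp0]
            split_ifs <;> first | ring1 | (exfalso; omega) |
              (rw [show ((l : ℕ) : ℝ) = 0 from by rw [hl0]; push_cast; ring]; ring1)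
          rw [Finset.sum_congr rfl (fun b _ => hRHS b), sum_delta 0 (by omega)]
          simp only [Fin.val_mk, Fin.ext_iff, zero_add, hl0]
          first
          | (split_ifs <;> first | (exfalso; omega) | (push_cast; ring1))
          | (push_cast; ring1)
        · by_cases hl1 : (l : ℕ) = 1
          · have hRHS : ∀ b : Fin (κ+1), Pmm κ l b * Mmm κ τ γ d b p
                = if (b : ℕ) = κ then ((l : ℕ) : ℝ) * (τ * (1 + d 1)) else 0 := by
              intro b
              have hb := b.isLt
              simp only [Pmm, Mmm, if_neg hpκ, if_pos hp0]
              split_ifs <;> first | ring1 | (exfalso; omega)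
            rw [Finset.sum_congr rfl (fun b _ => hRHS b), sum_delta κ (by omega)]
            simp only [Fin.val_mk, Fin.ext_iff, zero_add, hl1]
            first
            | (split_ifs <;> first | (exfalso; omega) | (push_cast; ring1))
            | (push_cast; ring1)
          · obtain ⟨m, hm⟩ : ∃ m, (l : ℕ) = m + 2 := ⟨(l : ℕ) - 2, by omega⟩
            have hRHS : ∀ b : Fin (κ+1), Pmm κ l b * Mmm κ τ γ d b p
                = (if (b : ℕ) = κ then ((l : ℕ) : ℝ) * (τ * (1 + d 1)) else 0)
                  + (if (b : ℕ) = m + 1 then -τ * (((b : ℕ) : ℝ) + 1) else 0) := by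
              intro b
              have hb := b.isLt
              simp only [Pmm, Mmm, if_neg hpκ, if_pos hp0]
              split_ifs <;> first | ring1 | (exfalso; omega)
            rw [Finset.sum_congr rfl (fun b _ => hRHS b), Finset.sum_add_distrib,
              sum_delta κ (by omega), sum_delta (m+1) (by omega)]
            simp only [Fin.val_mk, Fin.ext_iff, zero_add, hm]
            first
            | (split_ifs <;> first | (exfalso; omega) | (push_cast; ring1))
            | (push_cast; ring1)
      · -- middle columns
        have hppos : 0 < (p : ℕ) := Nat.pos_of_ne_zero hp0
        have hpk : (p : ℕ) < κ := by omega
        have hL : ∀ b : Fin (κ+1), Ω l b * Pmm κ b p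
            = if (b : ℕ) = (p : ℕ) + 1 then Ω l b else 0 := by
          intro b
          simp only [Pmm, if_neg hpκ, if_neg hp0]
          split_ifs <;> ring1
        rw [Finset.sum_congr rfl (fun b _ => hL b), sum_delta ((p : ℕ) + 1) (by omega), hΩ]
        by_cases hpk1 : (p : ℕ) + 1 = κ
        · have hRHS : ∀ b : Fin (κ+1), Pmm κ l b * Mmm κ τ γ d b p
              = (if (b : ℕ) = κ then ((l : ℕ) : ℝ) * (τ * d ((p : ℕ) + 2)) else 0)
                + (if (b : ℕ) = (p : ℕ) then
                    (if (l : ℕ) = (p : ℕ) + 1 then 1 else 0) * (-(γ + τ * (((p : ℕ) : ℝ) + 1))) else 0) := by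
            intro b
            have hb := b.isLt
            simp only [Pmm, Mmm, if_neg hpκ, if_neg hp0]
            split_ifs <;> first | ring1 | (exfalso; omega)
          rw [Finset.sum_congr rfl (fun b _ => hRHS b), Finset.sum_add_distrib,
            sum_delta κ (by omega), sum_delta (p : ℕ) (by omega)]
          simp only [Fin.val_mk, Fin.ext_iff, hadd]
          by_cases hlp : (l : ℕ) = (p : ℕ) + 1
          · simp only [hlp]
            first
            | (split_ifs <;> first | (exfalso; omega) | (push_cast; ring1))
            | (push_cast; ring1)
          · first
            | (split_ifs <;> first | (exfalso; omega) | (push_cast; ring1))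
            | (push_cast; ring1)
        · have hRHS : ∀ b : Fin (κ+1), Pmm κ l b * Mmm κ τ γ d b p
              = (if (b : ℕ) = κ then ((l : ℕ) : ℝ) * (τ * d ((p : ℕ) + 2)) else 0)
                + (if (b : ℕ) = (p : ℕ) then
                    (if (l : ℕ) = (p : ℕ) + 1 then 1 else 0) * (-(γ + τ * (((p : ℕ) : ℝ) + 1))) else 0)
                + (if (b : ℕ) = (p : ℕ) + 1 then
                    (if (l : ℕ) = (p : ℕ) + 2 then 1 else 0) * (τ * (((p : ℕ) : ℝ) + 2)) else 0) := by
            intro b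
            have hb := b.isLt
            simp only [Pmm, Mmm, if_neg hpκ, if_neg hp0]
            split_ifs <;> first | ring1 | (exfalso; omega)
          rw [Finset.sum_congr rfl (fun b _ => hRHS b), Finset.sum_add_distrib,
            Finset.sum_add_distrib, sum_delta κ (by omega), sum_delta (p : ℕ) (by omega),
            sum_delta ((p : ℕ) + 1) (by omega)]
          simp only [Fin.val_mk, Fin.ext_iff, hadd]
          by_cases hlp : (l : ℕ) = (p : ℕ) + 1
          · simp only [hlp]
            first
            | (split_ifs <;> first | (exfalso; omega) | (push_cast; ring1))
            | (push_cast; ring1)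
          · by_cases hlp2 : (l : ℕ) = (p : ℕ) + 2
            · simp only [hlp2]
              first
              | (split_ifs <;> first | (exfalso; omega) | (push_cast; ring1))
              | (push_cast; ring1)
            · first
              | (split_ifs <;> first | (exfalso; omega) | (push_cast; ring1))
              | (push_cast; ring1)
  have hchar : Ω.charpoly = (Mmm κ τ γ d).charpoly :=
    charpoly_eq_of_conj Ω (Pmm κ) (Qmm κ) (Mmm κ τ γ d) hQP hΩP
  -- M is lower triangular
  have htri : (Mmm κ τ γ d).charmatrix.BlockTriangular ⇑OrderDual.toDual := by
    intro q p h
    have hqp : (q : ℕ) < (p : ℕ) := h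
    rw [Matrix.charmatrix_apply_ne _ _ _ (by exact fun hh => by simp [hh] at hqp)]
    have : Mmm κ τ γ d q p = 0 := by
      have hp := p.isLt
      unfold Mmm
      split_ifs <;> first | rfl | (exfalso; omega)
    rw [this, map_zero, neg_zero]
  have hdetM : (Mmm κ τ γ d).charpoly = ∏ p : Fin (κ+1), (X - C (Mmm κ τ γ d p p)) := by
    rw [Matrix.charpoly, Matrix.det_of_lowerTriangular _ htri]
    exact Finset.prod_congr rfl (fun p _ => Matrix.charmatrix_apply_eq _ _)
  -- permutation matching diagonal to lam
  have hdiag : ∀ p : Fin (κ+1), Mmm κ τ γ d p p = lam (ePerm κ p) := by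
    intro p
    have hp := p.isLt
    rw [hlam]
    by_cases hp0 : (p : ℕ) = 0
    · have hev : ((ePerm κ p) : ℕ) = 0 := by (simp [ePerm, eFun, hp0]) <;> omega
      rw [hev]
      simp only [Mmm]
      split_ifs <;> first | contradiction | (exfalso; omega) | (push_cast; ring1)
    · by_cases hpκ : (p : ℕ) = κ
      · have hev : ((ePerm κ p) : ℕ) = 1 := by (simp [ePerm, eFun, hp0, hpκ]) <;> omega
        rw [hev]
        simp only [Mmm]
        split_ifs <;> first | contradiction | (exfalso; omega) | (push_cast; ring1)
      · have hev : ((ePerm κ p) : ℕ) = (p : ℕ) + 1 := by (simp [ePerm, eFun, hp0, hpκ]) <;> omega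
        rw [hev]
        simp only [Mmm]
        split_ifs <;> first | contradiction | (exfalso; omega) | (push_cast; ring1)
  rw [hchar, hdetM]
  calc ∏ p : Fin (κ+1), (X - C (Mmm κ τ γ d p p))
      = ∏ p : Fin (κ+1), (X - C (lam (ePerm κ p))) := by
        exact Finset.prod_congr rfl (fun p _ => by rw [hdiag p])
    _ = ∏ i : Fin (κ+1), (X - C (lam i)) := Equiv.prod_comp (ePerm κ) (fun i => X - C (lam i))
end

section
/- With Ω as above, let n = (0,1,…,κ)ᵀ and 1 the all-ones vector in ℝ^{κ+1}. Suppose ∑_{l=0}^κ d_{l+1} = 1. Then Ω 1 = τ n − γ 1 and Ω n = r n, where r = τ((∑_{l=0}^{κ} l d_{l+1}) − 1) − γ. -/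
open Finset

theorem stmt_4 (κ : ℕ) (τ γ : ℝ)
    (d : ℕ → ℝ) (hd : ∀ k, 0 ≤ d k) (hd' : ∀ k, κ < k → d k = 0)
    (hsum : ∑ l ∈ range (κ+1), d (l + 1) = 1)
    (Ω : Matrix (Fin (κ+1)) (Fin (κ+1)) ℝ)
    (hΩ : ∀ l k : Fin (κ+1),
      Ω l k = τ * (l : ℝ) * (d (k + 1) + (if (l : ℕ) = (k : ℕ) + 1 then 1 else 0))
              - (γ + τ * (l : ℝ)) * (if l = k then 1 else 0))
    (n : Fin (κ+1) → ℝ) (hn : ∀ i, n i = (i : ℝ))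
    (one : Fin (κ+1) → ℝ) (hone : ∀ i, one i = 1)
    (r : ℝ) (hr : r = τ * ((∑ l ∈ range (κ+1), (l : ℝ) * d (l + 1)) - 1) - γ) :
    Ω.mulVec one = τ • n - γ • one ∧ Ω.mulVec n = r • n := by
  have key : ∀ (f : ℕ → ℝ) (l : Fin (κ+1)),
      (∑ k ∈ range (κ+1), (if (l:ℕ) = k + 1 then (1:ℝ) else 0) * f k)
        = if (l:ℕ) = 0 then 0 else f ((l:ℕ) - 1) := by
    intro f l
    rcases Nat.eq_zero_or_pos (l:ℕ) with h | h
    · simp [h]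
    · obtain ⟨j, hj⟩ : ∃ j, (l:ℕ) = j + 1 := ⟨(l:ℕ)-1, (Nat.succ_pred_eq_of_pos h).symm⟩
      have hjm : j ∈ range (κ+1) := by
        have := l.isLt; simp only [mem_range]; omega
      rw [if_neg (by omega)]
      have : ∀ k ∈ range (κ+1),
          (if (l:ℕ) = k + 1 then (1:ℝ) else 0) * f k
            = if k = j then f k else 0 := by
        intro k _
        by_cases hk : k = j
        · simp [hk, hj]
        · rw [if_neg (by omega), if_neg hk, zero_mul]
      rw [Finset.sum_congr rfl this, Finset.sum_ite_eq' (range (κ+1)) j f, if_pos hjm, hj]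
      simp
  have keyδ : ∀ (f : ℕ → ℝ) (l : Fin (κ+1)),
      (∑ k ∈ range (κ+1), (if (l:ℕ) = k then (1:ℝ) else 0) * f k) = f (l:ℕ) := by
    intro f l
    have hm : (l:ℕ) ∈ range (κ+1) := by simp [l.isLt]
    have : ∀ k ∈ range (κ+1),
        (if (l:ℕ) = k then (1:ℝ) else 0) * f k = if k = (l:ℕ) then f k else 0 := by
      intro k _
      by_cases hk : k = (l:ℕ)
      · simp [hk]
      · rw [if_neg (by omega), if_neg hk, zero_mul]
    rw [Finset.sum_congr rfl this, Finset.sum_ite_eq' (range (κ+1)) _ f, if_pos hm]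
  constructor
  · funext l
    simp only [Matrix.mulVec, dotProduct, hΩ, hone, hn, Pi.sub_apply, Pi.smul_apply,
      smul_eq_mul, mul_one, Fin.ext_iff]
    rw [Fin.sum_univ_eq_sum_range (fun k =>
      τ * (l:ℝ) * (d (k + 1) + (if (l:ℕ) = k + 1 then 1 else 0))
        - (γ + τ * (l:ℝ)) * (if (l:ℕ) = k then 1 else 0))]
    have e1 : (∑ k ∈ range (κ+1),
        (τ * (l:ℝ) * (d (k + 1) + (if (l:ℕ) = k + 1 then 1 else 0))
          - (γ + τ * (l:ℝ)) * (if (l:ℕ) = k then 1 else 0)))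
        = τ * (l:ℝ) * (∑ k ∈ range (κ+1), d (k+1))
          + τ * (l:ℝ) * (∑ k ∈ range (κ+1), (if (l:ℕ) = k + 1 then (1:ℝ) else 0) * 1)
          - (γ + τ * (l:ℝ)) * (∑ k ∈ range (κ+1), (if (l:ℕ) = k then (1:ℝ) else 0) * 1) := by
      rw [mul_sum, mul_sum, mul_sum, ← Finset.sum_add_distrib, ← Finset.sum_sub_distrib]
      exact Finset.sum_congr rfl fun k _ => by ring
    rw [e1, hsum, key (fun _ => (1:ℝ)) l, keyδ (fun _ => (1:ℝ)) l]
    rcases Nat.eq_zero_or_pos (l:ℕ) with h | h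
    · rw [if_pos h, h]; push_cast; ring
    · rw [if_neg (by omega)]; ring
  · funext l
    simp only [Matrix.mulVec, dotProduct, hΩ, hn, Pi.smul_apply, smul_eq_mul, Fin.ext_iff]
    rw [Fin.sum_univ_eq_sum_range (fun k =>
      (τ * (l:ℝ) * (d (k + 1) + (if (l:ℕ) = k + 1 then 1 else 0))
        - (γ + τ * (l:ℝ)) * (if (l:ℕ) = k then 1 else 0)) * (k:ℝ))]
    have e1 : (∑ k ∈ range (κ+1),
        (τ * (l:ℝ) * (d (k + 1) + (if (l:ℕ) = k + 1 then 1 else 0))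
          - (γ + τ * (l:ℝ)) * (if (l:ℕ) = k then 1 else 0)) * (k:ℝ))
        = τ * (l:ℝ) * (∑ k ∈ range (κ+1), (k:ℝ) * d (k+1))
          + τ * (l:ℝ) * (∑ k ∈ range (κ+1), (if (l:ℕ) = k + 1 then (1:ℝ) else 0) * (k:ℝ))
          - (γ + τ * (l:ℝ)) * (∑ k ∈ range (κ+1), (if (l:ℕ) = k then (1:ℝ) else 0) * (k:ℝ)) := by
      rw [mul_sum, mul_sum, mul_sum, ← Finset.sum_add_distrib, ← Finset.sum_sub_distrib]
      exact Finset.sum_congr rfl fun k _ => by ring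
    rw [e1, key (fun k => (k:ℝ)) l, keyδ (fun k => (k:ℝ)) l, hr]
    rcases Nat.eq_zero_or_pos (l:ℕ) with h | h
    · rw [if_pos h, h]; push_cast; ring
    · rw [if_neg (by omega)]
      have : (((l:ℕ) - 1 : ℕ) : ℝ) = (l:ℝ) - 1 := by
        rw [Nat.cast_sub h]; norm_num
      rw [this]; ring
end

section
/- With Ω, n, 1, r as above (∑ d_{l+1} = 1) and writing μ = ∑_{l=0}^κ l d_{l+1} − 1 (so r = τμ − γ), assume μ ≠ 0. Then for all t ≥ 0: exp(Ω t) 1 = μ^{-1} (e^{r t} − e^{−γ t}) n + e^{−γ t} 1 and exp(Ω t) n = e^{r t} n. -/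
/-!
The vectors `n` and `1` span an `Ω`-invariant plane: `Ω n = r n` and `Ω 1 = τ n - γ 1`. Since
`μ ≠ 0`, the vector `1 - μ⁻¹ n` is then an eigenvector for the eigenvalue `-γ`, so writing
`1 = (1 - μ⁻¹ n) + μ⁻¹ n` and applying `exp (t Ω)` to each eigenvector gives both formulas.
-/

open Finset
open scoped Matrix

open scoped Matrix.Norms.Operator in
theorem Matrix.exp_mulVec_of_mulVec_eq_smul {m 𝕂 : Type*} [Fintype m] [DecidableEq m] [RCLike 𝕂]
    {A : Matrix m m 𝕂} {v : m → 𝕂} {c : 𝕂} (h : A *ᵥ v = c • v) :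
    NormedSpace.exp A *ᵥ v = NormedSpace.exp c • v := by
  have hpow (k : ℕ) : A ^ k *ᵥ v = c ^ k • v := by
    induction k with
    | zero => simp
    | succ k ih => rw [pow_succ', ← mulVec_mulVec, ih, mulVec_smul, h, smul_smul, pow_succ]
  have hA := (NormedSpace.exp_series_hasSum_exp' (𝕂 := 𝕂) A).map (mulVec.addMonoidHomLeft v)
    (continuous_id.matrix_mulVec continuous_const)
  have hc := (NormedSpace.exp_series_hasSum_exp' (𝕂 := 𝕂) c).smul_const v
  refine hA.unique (hc.congr_fun fun k => ?_)
  simp [mulVec.addMonoidHomLeft, smul_mulVec, hpow, smul_smul]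

section Real

variable {m : Type*} [Fintype m] [DecidableEq m]

theorem Matrix.exp_smul_mulVec_of_mulVec_eq_smul {A : Matrix m m ℝ} {v : m → ℝ} {c : ℝ}
    (h : A *ᵥ v = c • v) (t : ℝ) :
    NormedSpace.exp (t • A) *ᵥ v = Real.exp (c * t) • v := by
  rw [Real.exp_eq_exp_ℝ]
  exact exp_mulVec_of_mulVec_eq_smul (by rw [smul_mulVec, h, smul_smul, mul_comm])

theorem Matrix.exp_smul_mulVec_of_mulVec_eq_smul_sub_smul {A : Matrix m m ℝ} {u w : m → ℝ}
    {τ γ μ : ℝ} (hμ : μ ≠ 0) (hu : A *ᵥ u = (τ * μ - γ) • u) (hw : A *ᵥ w = τ • u - γ • w)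
    (t : ℝ) :
    NormedSpace.exp (t • A) *ᵥ w
      = (μ⁻¹ * (Real.exp ((τ * μ - γ) * t) - Real.exp (-γ * t))) • u
        + Real.exp (-γ * t) • w := by
  have hv : A *ᵥ (w - μ⁻¹ • u) = (-γ) • (w - μ⁻¹ • u) := by
    rw [mulVec_sub, mulVec_smul, hu, hw]
    ext i
    simp only [Pi.sub_apply, Pi.smul_apply, smul_eq_mul]
    field_simp
    ring
  have hdecomp : w = (w - μ⁻¹ • u) + μ⁻¹ • u := by abel
  conv_lhs => rw [hdecomp]
  rw [mulVec_add, mulVec_smul, exp_smul_mulVec_of_mulVec_eq_smul hu,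
    exp_smul_mulVec_of_mulVec_eq_smul hv]
  module

end Real

-- The factor `l` absorbs the junk value `f (0 - 1) = f 0` at `l = 0`.
theorem mul_sum_ite_eq_succ (f : ℕ → ℝ) {l N : ℕ} (hl : l ≤ N) :
    (l : ℝ) * ∑ k ∈ range N, (if l = k + 1 then f k else 0) = l * f (l - 1) := by
  rcases l with _ | l
  · simp
  · simp [Nat.lt_of_succ_le hl]

theorem mulVec_apply_of_forall_entry_eq (κ : ℕ) (τ γ : ℝ) (d : ℕ → ℝ)
    (Ω : Matrix (Fin (κ+1)) (Fin (κ+1)) ℝ)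
    (hΩ : ∀ l k : Fin (κ+1),
      Ω l k = τ * (l : ℝ) * (d (k + 1) + (if (l : ℕ) = (k : ℕ) + 1 then 1 else 0))
              - (γ + τ * (l : ℝ)) * (if l = k then 1 else 0))
    {v : Fin (κ+1) → ℝ} (f : ℕ → ℝ) (hv : ∀ i, v i = f i) (l : Fin (κ+1)) :
    (Ω *ᵥ v) l
      = τ * l * (∑ k ∈ range (κ+1), f k * d (k+1) + f (l - 1)) - (γ + τ * l) * f l := by
  have hentry (k : Fin (κ+1)) : Ω l k * v k = τ * l * (f k * d (k+1))
      + τ * (l * (if (l : ℕ) = k + 1 then f k else 0))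
      - (γ + τ * l) * (if l = k then f l else 0) := by
    rcases eq_or_ne l k with rfl | _ <;> rw [hΩ, hv] <;> split_ifs <;> ring
  simp only [Matrix.mulVec, dotProduct, hentry, sum_add_distrib, sum_sub_distrib, ← mul_sum,
    sum_ite_eq, mem_univ, if_true]
  rw [Fin.sum_univ_eq_sum_range (fun k => f k * d (k+1)),
    Fin.sum_univ_eq_sum_range (fun k => if (l : ℕ) = k + 1 then f k else 0),
    mul_sum_ite_eq_succ f l.is_lt.le]
  ring

theorem stmt_5_general (κ : ℕ) (τ γ : ℝ)
    (d : ℕ → ℝ)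
    (hsum : ∑ l ∈ range (κ+1), d (l + 1) = 1)
    (Ω : Matrix (Fin (κ+1)) (Fin (κ+1)) ℝ)
    (hΩ : ∀ l k : Fin (κ+1),
      Ω l k = τ * (l : ℝ) * (d (k + 1) + (if (l : ℕ) = (k : ℕ) + 1 then 1 else 0))
              - (γ + τ * (l : ℝ)) * (if l = k then 1 else 0))
    (n : Fin (κ+1) → ℝ) (hn : ∀ i, n i = (i : ℝ))
    (one : Fin (κ+1) → ℝ) (hone : ∀ i, one i = 1)
    (μ : ℝ) (hμ : μ = (∑ l ∈ range (κ+1), (l : ℝ) * d (l + 1)) - 1) (hμ0 : μ ≠ 0)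
    (r : ℝ) (hr : r = τ * μ - γ) :
    ∀ t : ℝ, 0 ≤ t →
      (NormedSpace.exp (t • Ω)).mulVec one
        = (μ⁻¹ * (Real.exp (r * t) - Real.exp (-γ * t))) • n
          + Real.exp (-γ * t) • one ∧
      (NormedSpace.exp (t • Ω)).mulVec n = Real.exp (r * t) • n := by
  subst hr
  have hΩn : Ω *ᵥ n = (τ * μ - γ) • n := by
    ext l
    rw [mulVec_apply_of_forall_entry_eq κ τ γ d Ω hΩ Nat.cast hn, ← eq_sub_iff_add_eq.mp hμ]
    rcases l with ⟨_ | l, _⟩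
    · simp [hn]
    · simp only [Pi.smul_apply, smul_eq_mul, hn, add_tsub_cancel_right]
      push_cast
      ring
  have hΩone : Ω *ᵥ one = τ • n - γ • one := by
    ext l
    rw [mulVec_apply_of_forall_entry_eq κ τ γ d Ω hΩ 1 hone]
    simp only [Pi.one_apply, one_mul, hsum, Pi.sub_apply, Pi.smul_apply, smul_eq_mul, hn, hone]
    ring
  exact fun t _ => ⟨Matrix.exp_smul_mulVec_of_mulVec_eq_smul_sub_smul hμ0 hΩn hΩone t,
    Matrix.exp_smul_mulVec_of_mulVec_eq_smul hΩn t⟩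

theorem stmt_5 (κ : ℕ) (τ γ : ℝ)
    (d : ℕ → ℝ) (hd : ∀ k, 0 ≤ d k) (hd' : ∀ k, κ < k → d k = 0)
    (hsum : ∑ l ∈ range (κ+1), d (l + 1) = 1)
    (Ω : Matrix (Fin (κ+1)) (Fin (κ+1)) ℝ)
    (hΩ : ∀ l k : Fin (κ+1),
      Ω l k = τ * (l : ℝ) * (d (k + 1) + (if (l : ℕ) = (k : ℕ) + 1 then 1 else 0))
              - (γ + τ * (l : ℝ)) * (if l = k then 1 else 0))
    (n : Fin (κ+1) → ℝ) (hn : ∀ i, n i = (i : ℝ))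
    (one : Fin (κ+1) → ℝ) (hone : ∀ i, one i = 1)
    (μ : ℝ) (hμ : μ = (∑ l ∈ range (κ+1), (l : ℝ) * d (l + 1)) - 1) (hμ0 : μ ≠ 0)
    (r : ℝ) (hr : r = τ * μ - γ) :
    ∀ t : ℝ, 0 ≤ t →
      (NormedSpace.exp (t • Ω)).mulVec one
        = (μ⁻¹ * (Real.exp (r * t) - Real.exp (-γ * t))) • n
          + Real.exp (-γ * t) • one ∧
      (NormedSpace.exp (t • Ω)).mulVec n = Real.exp (r * t) • n :=
  stmt_5_general κ τ γ d hsum Ω hΩ n hn one hone μ hμ hμ0 r hr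
end
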